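/- Let X be a pointed metric space. A subset of Lip₀(X) is τ_γ-compact if and only if it is norm bounded and τ₀-compact; the same equivalence holds with 'compact' replaced by 'precompact' and by 'relatively compact'. -/

import Mathlib

/-!
On norm-bounded sets `τ_γ` and `τ₀` coincide: a basic `τ_γ`-neighbourhood `f + γ(U)`
contains `f + (Uₙ ∩ {g | ‖g‖ ≤ 2ⁿ})` for every `n`, the trace of a `τ₀`-neighbourhood on a
ball. Since moreover `τ_γ` is finer than `τ₀`, bounded `τ₀`-compact (precompact) sets are
`τ_γ`-compact (precompact).

Conversely, a `τ_γ`-compact or `τ_γ`-precompact set is norm bounded. Otherwise pick `fₙ` in it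
and points `xₙ, yₙ` at which the slope of `fₙ` exceeds `4ⁿ`. The seminorm
`f ↦ supₙ 2⁻ⁿ ‖f xₙ - f yₙ‖ / d(xₙ, yₙ)` is unbounded on the set, yet it is `τ_γ`-continuous:
on each ball it is uniformly approximated by finitely many of its terms, which are
`τ₀`-continuous, and a geometric series absorbs the errors along `γ(U)`.

For relative compactness one uses in addition that `τ₀` is Hausdorff and that closed balls of
`Lip₀(X)` are `τ₀`-closed.
-/

open Filter Topology Set Pointwise

set_option linter.unusedSectionVars false
set_option linter.unusedVariables false

noncomputable section

namespace LipApprox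

variable (X : Type*) [MetricSpace X] (x₀ : X)
variable (F : Type*) [NormedAddCommGroup F] [NormedSpace ℝ F]

/-- The Lipschitz maps `X → F` vanishing at the base point, as a submodule of `X → F`. -/
def lip0Submodule : Submodule ℝ (X → F) where
  carrier := {f | (∃ K, LipschitzWith K f) ∧ f x₀ = 0}
  add_mem' := by
    rintro f g ⟨⟨Kf, hf⟩, hf0⟩ ⟨⟨Kg, hg⟩, hg0⟩
    exact ⟨⟨Kf + Kg, hf.add hg⟩, by simp [hf0, hg0]⟩
  zero_mem' := ⟨⟨0, LipschitzWith.const 0⟩, rfl⟩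
  smul_mem' := by
    rintro c f ⟨⟨K, hf⟩, hf0⟩
    exact ⟨⟨‖c‖₊ * K, (lipschitzWith_smul c).comp hf⟩, by simp [hf0]⟩

/-- The space `Lip₀(X, F)` of Lipschitz maps from `X` to `F` vanishing at the base point. -/
def lip0 : Type _ := ↥(lip0Submodule X x₀ F)

instance : AddCommGroup (lip0 X x₀ F) :=
  inferInstanceAs (AddCommGroup ↥(lip0Submodule X x₀ F))

instance : Module ℝ (lip0 X x₀ F) :=
  inferInstanceAs (Module ℝ ↥(lip0Submodule X x₀ F))

variable {X x₀ F}

/-- The underlying function of an element of `Lip₀(X, F)`. -/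
def toFun' (f : lip0 X x₀ F) : X → F := f.1

lemma exists_lip (f : lip0 X x₀ F) : ∃ K, LipschitzWith K (toFun' f) := f.2.1

lemma apply_base (f : lip0 X x₀ F) : toFun' f x₀ = 0 := f.2.2

lemma toFun'_add (f g : lip0 X x₀ F) : toFun' (f + g) = toFun' f + toFun' g := rfl
lemma toFun'_neg (f : lip0 X x₀ F) : toFun' (-f) = -toFun' f := rfl
lemma toFun'_smul (c : ℝ) (f : lip0 X x₀ F) : toFun' (c • f) = c • toFun' f := rfl
lemma toFun'_zero : toFun' (0 : lip0 X x₀ F) = 0 := rfl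

variable (X x₀ F) in
/-- The Lipschitz norm of an element of `Lip₀(X, F)`. -/
def lipNorm (f : lip0 X x₀ F) : ℝ :=
  ⨆ p : X × X, ‖toFun' f p.1 - toFun' f p.2‖ / dist p.1 p.2

lemma ratio_le (f : lip0 X x₀ F) {K : NNReal} (hK : LipschitzWith K (toFun' f))
    (p : X × X) : ‖toFun' f p.1 - toFun' f p.2‖ / dist p.1 p.2 ≤ K := by
  rcases eq_or_ne p.1 p.2 with h | h
  · simp [h]
  · rw [div_le_iff₀ (dist_pos.2 h), ← dist_eq_norm]
    exact hK.dist_le_mul p.1 p.2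

lemma bddAbove_ratio (f : lip0 X x₀ F) :
    BddAbove (Set.range fun p : X × X =>
      ‖toFun' f p.1 - toFun' f p.2‖ / dist p.1 p.2) := by
  obtain ⟨K, hK⟩ := exists_lip f
  exact ⟨K, by rintro r ⟨p, rfl⟩; exact ratio_le f hK p⟩

lemma nonempty_pairs (x₀ : X) : Nonempty (X × X) := ⟨(x₀, x₀)⟩

lemma ratio_le_lipNorm (f : lip0 X x₀ F) (p : X × X) :
    ‖toFun' f p.1 - toFun' f p.2‖ / dist p.1 p.2 ≤ lipNorm X x₀ F f :=
  le_ciSup (bddAbove_ratio f) p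

lemma lipNorm_nonneg (f : lip0 X x₀ F) : 0 ≤ lipNorm X x₀ F f := by
  have := ratio_le_lipNorm (x₀ := x₀) f (x₀, x₀)
  simpa using this

lemma norm_sub_le_lipNorm (f : lip0 X x₀ F) (x y : X) :
    ‖toFun' f x - toFun' f y‖ ≤ lipNorm X x₀ F f * dist x y := by
  rcases eq_or_ne x y with rfl | h
  · simp
  · have := ratio_le_lipNorm (x₀ := x₀) f (x, y)
    rw [div_le_iff₀ (dist_pos.2 h)] at this
    simpa using this

instance : NormedAddCommGroup (lip0 X x₀ F) :=
  AddGroupNorm.toNormedAddCommGroup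
    { toFun := lipNorm X x₀ F
      map_zero' := by
        haveI : Nonempty (X × X) := nonempty_pairs x₀
        have h0 : ∀ p : X × X,
            ‖toFun' (0 : lip0 X x₀ F) p.1 - toFun' (0 : lip0 X x₀ F) p.2‖ /
              dist p.1 p.2 = 0 := by
          intro p; rw [toFun'_zero]; simp
        simp only [lipNorm, h0, ciSup_const]
      add_le' := by
        intro f g
        haveI : Nonempty (X × X) := nonempty_pairs x₀
        apply ciSup_le
        intro p
        rcases eq_or_ne p.1 p.2 with h | h
        · simp only [h, dist_self, div_zero]
          exact add_nonneg (lipNorm_nonneg f) (lipNorm_nonneg g)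
        · have hnum : ‖toFun' (f + g) p.1 - toFun' (f + g) p.2‖ ≤
              ‖toFun' f p.1 - toFun' f p.2‖ + ‖toFun' g p.1 - toFun' g p.2‖ := by
            rw [toFun'_add, Pi.add_apply, Pi.add_apply, add_sub_add_comm]
            exact norm_add_le _ _
          calc ‖toFun' (f + g) p.1 - toFun' (f + g) p.2‖ / dist p.1 p.2
              ≤ (‖toFun' f p.1 - toFun' f p.2‖ +
                  ‖toFun' g p.1 - toFun' g p.2‖) / dist p.1 p.2 := by gcongr
            _ = ‖toFun' f p.1 - toFun' f p.2‖ / dist p.1 p.2 +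
                  ‖toFun' g p.1 - toFun' g p.2‖ / dist p.1 p.2 := add_div _ _ _
            _ ≤ lipNorm X x₀ F f + lipNorm X x₀ F g :=
                add_le_add (ratio_le_lipNorm f p) (ratio_le_lipNorm g p)
      neg' := by
        intro f
        simp only [lipNorm]
        congr 1
        funext p
        congr 1
        rw [toFun'_neg, Pi.neg_apply, Pi.neg_apply, neg_sub_neg, norm_sub_rev]
      eq_zero_of_map_eq_zero' := by
        intro f hf
        have hzero : ∀ x : X, toFun' f x = 0 := by
          intro x
          rcases eq_or_ne x x₀ with h | h
          · rw [h]; exact apply_base f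
          · have hf' : lipNorm X x₀ F f = 0 := hf
            have h1 := ratio_le_lipNorm (x₀ := x₀) f (x, x₀)
            rw [hf', div_le_iff₀ (dist_pos.2 h), zero_mul] at h1
            have h2 : toFun' f x - toFun' f x₀ = 0 := by
              simpa using norm_le_zero_iff.1 h1
            have h3 := apply_base f
            rw [h3, sub_zero] at h2
            exact h2
        exact Subtype.ext (funext hzero) }

lemma lip0_norm_def (f : lip0 X x₀ F) : ‖f‖ = lipNorm X x₀ F f := rfl

instance : NormedSpace ℝ (lip0 X x₀ F) where
  norm_smul_le c f := by
    haveI : Nonempty (X × X) := nonempty_pairs x₀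
    rw [lip0_norm_def, lip0_norm_def, lipNorm]
    apply ciSup_le
    intro p
    have h1 : toFun' (c • f) p.1 - toFun' (c • f) p.2 =
        c • (toFun' f p.1 - toFun' f p.2) := by
      rw [toFun'_smul, Pi.smul_apply, Pi.smul_apply, smul_sub]
    rw [h1, norm_smul]
    rcases eq_or_ne p.1 p.2 with h | h
    · simp only [h, dist_self, div_zero]
      exact mul_nonneg (norm_nonneg c) (lipNorm_nonneg f)
    · rw [mul_div_assoc]
      exact mul_le_mul_of_nonneg_left (ratio_le_lipNorm (x₀ := x₀) f p) (norm_nonneg c)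

variable (X x₀ F)

/-- Elements of `Lip₀(X, F)` as continuous maps. -/
def toCM (f : lip0 X x₀ F) : C(X, F) :=
  ⟨toFun' f, by
    obtain ⟨K, hK⟩ := exists_lip f
    exact hK.continuous⟩

/-- The compact-open topology `τ₀` on `Lip₀(X, F)`. -/
def tau0 : TopologicalSpace (lip0 X x₀ F) :=
  TopologicalSpace.induced (toCM X x₀ F) ContinuousMap.compactOpen

/-- The set `γ(U) = ⋃ₙ (U₀ ∩ B + U₁ ∩ 2B + ⋯ + Uₙ ∩ 2ⁿB)` from the definition of the
mixed topology, where `B` is the closed unit ball of `Lip₀(X, F)`. -/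
def gammaSet (U : ℕ → Set (lip0 X x₀ F)) : Set (lip0 X x₀ F) :=
  ⋃ n : ℕ, ∑ i ∈ Finset.range (n + 1), (U i ∩ {f | ‖f‖ ≤ 2 ^ i})

/-- The mixed topology `τ_γ = γ[Lip, τ₀]` on `Lip₀(X, F)`: the topology whose
neighborhoods of a point `f` are generated by the translates by `f` of the sets `γ(U)`,
where `U` runs over all sequences of convex balanced `τ₀`-neighborhoods of zero. -/
def tauGamma : TopologicalSpace (lip0 X x₀ F) :=
  TopologicalSpace.mkOfNhds fun f =>
    ⨅ (U : ℕ → Set (lip0 X x₀ F))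
      (_ : ∀ n, U n ∈ @nhds _ (tau0 X x₀ F) 0 ∧ Convex ℝ (U n) ∧ Balanced ℝ (U n)),
      Filter.principal ((f + ·) '' gammaSet X x₀ F U)

/-- A subset of `Lip₀(X, F)` is norm bounded if the Lipschitz norms of its members are
uniformly bounded. -/
def NormBounded (B : Set (lip0 X x₀ F)) : Prop :=
  ∃ C : ℝ, ∀ f ∈ B, ‖f‖ ≤ C

/-- The locally convex topology `γτ_γ` on `Lip₀(X, F)`, generated by the seminorms
`f ↦ sup_n αₙ ‖f xₙ - f yₙ‖ / d(xₙ, yₙ)` where `(αₙ)` is a sequence of positive reals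
tending to zero and `((xₙ, yₙ))` is a sequence of pairs of distinct points of `X`. -/
def gammaTauGamma : TopologicalSpace (lip0 X x₀ F) :=
  ⨅ (α : ℕ → ℝ) (z : ℕ → X × X)
    (_ : (∀ n, 0 < α n) ∧ Filter.Tendsto α Filter.atTop (nhds 0) ∧
      ∀ n, (z n).1 ≠ (z n).2),
    TopologicalSpace.induced
      (fun f => UniformFun.ofFun fun n =>
        (α n / dist (z n).1 (z n).2) • (toFun' f (z n).1 - toFun' f (z n).2))
      inferInstance

/-- Evaluation at a point of `X`, as a linear functional on `Lip₀(X)`. -/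
def evalLM (x : X) : lip0 X x₀ ℝ →ₗ[ℝ] ℝ where
  toFun f := toFun' f x
  map_add' f g := rfl
  map_smul' c f := rfl

/-- Evaluation at a point of `X`, as a continuous linear functional on `Lip₀(X)`. -/
def evalCLM (x : X) : lip0 X x₀ ℝ →L[ℝ] ℝ :=
  LinearMap.mkContinuous (evalLM X x₀ x) (dist x x₀)
    (fun f => by
      have h0 : toFun' f x₀ = 0 := apply_base f
      have h := norm_sub_le_lipNorm (x₀ := x₀) f x x₀
      rw [h0, sub_zero] at h
      calc ‖evalLM X x₀ x f‖ ≤ lipNorm X x₀ ℝ f * dist x x₀ := h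
        _ = dist x x₀ * ‖f‖ := by rw [lip0_norm_def, mul_comm])

/-- The Lipschitz-free space `F(X)`: the closed linear span of the evaluation
functionals inside the dual of `Lip₀(X)`. -/
def freeSpace : Submodule ℝ (lip0 X x₀ ℝ →L[ℝ] ℝ) :=
  (Submodule.span ℝ (Set.range (evalCLM X x₀))).topologicalClosure

/-- The Dirac map `δ : X → F(X)`. -/
def deltaF (x : X) : freeSpace X x₀ :=
  ⟨evalCLM X x₀ x,
    Submodule.le_topologicalClosure _ (Submodule.subset_span (Set.mem_range_self x))⟩

/-- For a normed space `G`, the topology on the dual `G'` of uniform convergence on the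
convex balanced compact subsets of `G` (the topology of `G'_c`). -/
def dualcTop (G : Type*) [NormedAddCommGroup G] [NormedSpace ℝ G] :
    TopologicalSpace (G →L[ℝ] ℝ) :=
  TopologicalSpace.induced
    (fun φ => UniformOnFun.ofFun {L : Set G | IsCompact L ∧ Convex ℝ L ∧ Balanced ℝ L} ⇑φ)
    inferInstance

open scoped NNReal

variable {X x₀ F}

lemma sum_range_lt_of_lt_div_two_pow {a : ℕ → ℝ} {ε : ℝ} (hε : 0 ≤ ε) (n : ℕ)
    (h : ∀ i ∈ Finset.range (n + 1), a i < ε / 2 / 2 ^ i) :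
    ∑ i ∈ Finset.range (n + 1), a i < ε :=
  calc ∑ i ∈ Finset.range (n + 1), a i
      < ∑ i ∈ Finset.range (n + 1), ε / 2 / 2 ^ i :=
        Finset.sum_lt_sum_of_nonempty Finset.nonempty_range_add_one h
    _ ≤ ∑' i, ε / 2 / 2 ^ i :=
        (summable_geometric_two' ε).sum_le_tsum _ fun _ _ => by positivity
    _ = ε := tsum_geometric_two' ε

section Precompact

variable {E : Type*} [AddCommGroup E]

def IsPrecompact (t : TopologicalSpace E) (B : Set E) : Prop :=
  ∀ V ∈ @nhds _ t 0, ∃ A : Finset E, B ⊆ ↑A + V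

lemma IsPrecompact.mono {t₁ t₂ : TopologicalSpace E} {B : Set E} (h : t₁ ≤ t₂)
    (hB : IsPrecompact t₁ B) : IsPrecompact t₂ B :=
  fun V hV => hB V (nhds_mono h hV)

lemma IsPrecompact.exists_finset_subset_add [t : TopologicalSpace E] [IsTopologicalAddGroup E]
    {B : Set E} (hB : IsPrecompact t B) {W : Set E} (hW : W ∈ 𝓝 0) :
    ∃ A : Finset E, ↑A ⊆ B ∧ B ⊆ ↑A + W := by
  classical
  -- Recentre each cell `a + V` that meets `B` at a point of `B`; `V - V ⊆ W` absorbs the shift.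
  obtain ⟨V, hV, hVW⟩ := exists_nhds_half_neg hW
  obtain ⟨A, hA⟩ := hB V hV
  choose! c hcB hcV using fun a (h : ∃ b ∈ B, b - a ∈ V) => h
  refine ⟨(A.filter fun a => ∃ b ∈ B, b - a ∈ V).image c, ?_, fun f hf => ?_⟩
  · simp only [Finset.coe_image, Finset.coe_filter, image_subset_iff]
    exact fun a ha => hcB a ha.2
  · obtain ⟨a, ha, v, hv, rfl⟩ := hA hf
    have hex : ∃ b ∈ B, b - a ∈ V := ⟨a + v, hf, by simpa using hv⟩
    refine ⟨c a, Finset.mem_image_of_mem _ (Finset.mem_filter.2 ⟨ha, hex⟩), a + v - c a,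
      ?_, add_sub_cancel _ _⟩
    convert hVW _ hv _ (hcV a hex) using 1
    abel

lemma IsPrecompact.bddAbove_image_seminorm [Module ℝ E] {t : TopologicalSpace E} {B : Set E}
    (hB : IsPrecompact t B) (p : Seminorm ℝ E) (hp : {x | p x < 1} ∈ @nhds _ t 0) :
    BddAbove (p '' B) := by
  obtain ⟨A, hA⟩ := hB _ hp
  refine ⟨∑ a ∈ A, p a + 1, ?_⟩
  rintro _ ⟨f, hf, rfl⟩
  obtain ⟨a, ha, v, hv, rfl⟩ := hA hf
  calc p (a + v) ≤ p a + p v := map_add_le_add p a v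
    _ ≤ ∑ a ∈ A, p a + 1 :=
      add_le_add (Finset.single_le_sum (fun b _ => apply_nonneg p b) ha) (le_of_lt hv)

end Precompact

lemma isCompact_of_le {α : Type*} {t₁ t₂ : TopologicalSpace α} (h : t₁ ≤ t₂)
    {K : Set α} (hK : @IsCompact _ t₁ K) : @IsCompact _ t₂ K := by
  simpa using @IsCompact.image _ _ t₁ t₂ _ _ hK (continuous_id_of_le h)

section Lip0

def toFunₗ : lip0 X x₀ F →ₗ[ℝ] X → F where
  toFun := toFun'
  map_add' := toFun'_add
  map_smul' := toFun'_smul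

lemma toFun'_sum {ι : Type*} (s : Finset ι) (g : ι → lip0 X x₀ F) :
    toFun' (∑ i ∈ s, g i) = ∑ i ∈ s, toFun' (g i) :=
  map_sum toFunₗ g s

lemma norm_le_iff {f : lip0 X x₀ F} {r : ℝ} (hr : 0 ≤ r) :
    ‖f‖ ≤ r ↔ ∀ x y, ‖toFun' f x - toFun' f y‖ ≤ r * dist x y := by
  have := nonempty_pairs x₀
  refine ⟨fun h x y => (norm_sub_le_lipNorm f x y).trans (by gcongr; exact h), fun h => ?_⟩
  exact ciSup_le fun p => div_le_of_le_mul₀ dist_nonneg hr (h p.1 p.2)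

def evalSub (x y : X) : lip0 X x₀ F →ₗ[ℝ] F :=
  (LinearMap.proj (R := ℝ) (φ := fun _ : X => F) x - LinearMap.proj y) ∘ₗ toFunₗ

def slopeSeminorm (x y : X) : Seminorm ℝ (lip0 X x₀ F) :=
  (nndist x y)⁻¹ • (normSeminorm ℝ F).comp (evalSub x y)

lemma slopeSeminorm_apply (x y : X) (f : lip0 X x₀ F) :
    slopeSeminorm x y f = ‖toFun' f x - toFun' f y‖ / dist x y := by
  simp [slopeSeminorm, evalSub, toFunₗ, div_eq_inv_mul, NNReal.smul_def]

lemma slopeSeminorm_le_norm (x y : X) (f : lip0 X x₀ F) : slopeSeminorm x y f ≤ ‖f‖ := by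
  rw [slopeSeminorm_apply]
  exact ratio_le_lipNorm f (x, y)

lemma exists_lt_slopeSeminorm {f : lip0 X x₀ F} {r : ℝ} (h : r < ‖f‖) :
    ∃ x y : X, r < slopeSeminorm x y f := by
  have := nonempty_pairs x₀
  obtain ⟨p, hp⟩ := exists_lt_of_lt_ciSup h
  exact ⟨p.1, p.2, by rwa [slopeSeminorm_apply]⟩

end Lip0

section Tau0

def toCMAddHom : lip0 X x₀ F →+ C(X, F) where
  toFun := toCM X x₀ F
  map_zero' := rfl
  map_add' _ _ := rfl

lemma isTopologicalAddGroup_tau0 : @IsTopologicalAddGroup (lip0 X x₀ F) (tau0 X x₀ F) _ :=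
  topologicalAddGroup_induced (toCMAddHom (x₀ := x₀))

lemma continuous_tau0_toCM : Continuous[tau0 X x₀ F, _] (toCM X x₀ F) :=
  continuous_induced_dom

lemma continuous_tau0_apply (x : X) : Continuous[tau0 X x₀ F, _] fun f => toFun' f x :=
  @Continuous.comp _ _ _ (tau0 X x₀ F) _ _ _ _ (continuous_eval_const x) continuous_tau0_toCM

lemma t2Space_tau0 : @T2Space (lip0 X x₀ F) (tau0 X x₀ F) :=
  @T2Space.of_injective_continuous _ _ (tau0 X x₀ F) _ _ _
    (fun _ _ h => Subtype.ext (congrArg DFunLike.coe h)) continuous_tau0_toCM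

lemma tau0_hasBasis_zero :
    (@nhds _ (tau0 X x₀ F) 0).HasBasis (fun p : Set X × ℝ => IsCompact p.1 ∧ 0 < p.2)
      fun p => {g | ∀ x ∈ p.1, ‖toFun' g x‖ < p.2} := by
  unfold tau0
  rw [nhds_induced]
  refine ((nhds_basis_uniformity'
    Metric.uniformity_basis_dist.compactConvergenceUniformity).comap _).congr
    (fun _ => Iff.rfl) fun p _ => ?_
  ext g
  simp [toCM, UniformSpace.ball, toFun'_zero]

lemma isClosed_tau0_closedBall {r : ℝ} (hr : 0 ≤ r) :
    IsClosed[tau0 X x₀ F] {f | ‖f‖ ≤ r} := by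
  let := tau0 X x₀ F
  simp only [norm_le_iff hr, Set.ofPred_forall]
  exact isClosed_iInter fun x => isClosed_iInter fun y =>
    isClosed_le ((continuous_tau0_apply x).sub (continuous_tau0_apply y)).norm continuous_const

lemma continuous_tau0_slopeSeminorm (x y : X) :
    Continuous[tau0 X x₀ F, _] (slopeSeminorm x y) := by
  let := tau0 X x₀ F
  simp only [funext (slopeSeminorm_apply (x₀ := x₀) (F := F) x y)]
  exact ((continuous_tau0_apply x).sub (continuous_tau0_apply y)).norm.div_const _

end Tau0

section TauGamma

def IsAdmissible (U : ℕ → Set (lip0 X x₀ F)) : Prop :=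
  ∀ n, U n ∈ @nhds _ (tau0 X x₀ F) 0 ∧ Convex ℝ (U n) ∧ Balanced ℝ (U n)

lemma IsAdmissible.inter {U V : ℕ → Set (lip0 X x₀ F)} (hU : IsAdmissible U)
    (hV : IsAdmissible V) : IsAdmissible fun n => U n ∩ V n := fun n =>
  ⟨inter_mem (hU n).1 (hV n).1, (hU n).2.1.inter (hV n).2.1, (hU n).2.2.inter (hV n).2.2⟩

lemma IsAdmissible.zero_mem {U : ℕ → Set (lip0 X x₀ F)} (hU : IsAdmissible U) (n : ℕ) :
    0 ∈ U n :=
  @mem_of_mem_nhds _ (tau0 X x₀ F) _ _ (hU n).1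

lemma gammaSet_mono {U V : ℕ → Set (lip0 X x₀ F)} (h : ∀ n, U n ⊆ V n) :
    gammaSet X x₀ F U ⊆ gammaSet X x₀ F V :=
  iUnion_mono fun _ =>
    Set.finsetSum_subset_finsetSum _ _ _ fun i _ => inter_subset_inter_left _ (h i)

lemma mem_gammaSet_iff {U : ℕ → Set (lip0 X x₀ F)} {g : lip0 X x₀ F} :
    g ∈ gammaSet X x₀ F U ↔ ∃ n, ∃ h : ℕ → lip0 X x₀ F,
      (∀ i ∈ Finset.range (n + 1), h i ∈ U i ∧ ‖h i‖ ≤ 2 ^ i) ∧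
        ∑ i ∈ Finset.range (n + 1), h i = g := by
  simp only [gammaSet, mem_iUnion, Set.mem_finsetSum, exists_prop]
  exact exists_congr fun _ => exists_congr fun _ =>
    ⟨fun ⟨h₁, h₂⟩ => ⟨fun _ hi => h₁ hi, h₂⟩, fun ⟨h₁, h₂⟩ => ⟨h₁ _, h₂⟩⟩

lemma IsAdmissible.mem_gammaSet {U : ℕ → Set (lip0 X x₀ F)} (hU : IsAdmissible U)
    {g : lip0 X x₀ F} {n : ℕ} (hg : g ∈ U n) (hn : ‖g‖ ≤ 2 ^ n) :
    g ∈ gammaSet X x₀ F U := by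
  classical
  refine mem_gammaSet_iff.2 ⟨n, Pi.single n g, fun i _ => ?_, by simp [Finset.sum_pi_single']⟩
  rcases eq_or_ne i n with rfl | hi
  · simpa using ⟨hg, hn⟩
  · rw [Pi.single_eq_of_ne hi, norm_zero]
    exact ⟨hU.zero_mem i, by positivity⟩

lemma isOpen_tauGamma_iff {S : Set (lip0 X x₀ F)} :
    IsOpen[tauGamma X x₀ F] S ↔
      ∀ f ∈ S, ∃ U, IsAdmissible U ∧ (f + ·) '' gammaSet X x₀ F U ⊆ S := by
  have hbasis (f : lip0 X x₀ F) :
      (⨅ (U) (_ : IsAdmissible U), 𝓟 ((f + ·) '' gammaSet X x₀ F U)).HasBasis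
        IsAdmissible fun U => (f + ·) '' gammaSet X x₀ F U :=
    hasBasis_biInf_principal'
      (fun U hU V hV => ⟨_, hU.inter hV, image_mono (gammaSet_mono fun _ => inter_subset_left),
        image_mono (gammaSet_mono fun _ => inter_subset_right)⟩)
      ⟨fun _ => univ, fun _ => ⟨univ_mem, convex_univ, balanced_univ⟩⟩
  exact forall₂_congr fun f _ => (hbasis f).mem_iff

lemma exists_isAdmissible_of_mem_nhds {f : lip0 X x₀ F} {V : Set (lip0 X x₀ F)}
    (hV : V ∈ @nhds _ (tauGamma X x₀ F) f) :
    ∃ U, IsAdmissible U ∧ (f + ·) '' gammaSet X x₀ F U ⊆ V := by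
  obtain ⟨S, hSV, hS, hfS⟩ := (@mem_nhds_iff _ (tauGamma X x₀ F) f V).1 hV
  obtain ⟨U, hU, hUS⟩ := isOpen_tauGamma_iff.1 hS f hfS
  exact ⟨U, hU, hUS.trans hSV⟩

lemma convex_and_balanced_setOf_forall_norm_lt (K : Set X) (η : ℝ) :
    Convex ℝ {g : lip0 X x₀ F | ∀ x ∈ K, ‖toFun' g x‖ < η} ∧
      Balanced ℝ {g : lip0 X x₀ F | ∀ x ∈ K, ‖toFun' g x‖ < η} := by
  have : {g : lip0 X x₀ F | ∀ x ∈ K, ‖toFun' g x‖ < η} =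
      ⋂ x ∈ K, ((normSeminorm ℝ F).comp (LinearMap.proj x ∘ₗ toFunₗ)).ball 0 η := by
    ext g
    simp [toFunₗ]
  rw [this]
  exact ⟨convex_iInter₂ fun _ _ => Seminorm.convex_ball _ _ _,
    balanced_iInter₂ fun _ _ => Seminorm.balanced_ball_zero _ _⟩

lemma tauGamma_le_tau0 : tauGamma X x₀ F ≤ tau0 X x₀ F := by
  let := tau0 X x₀ F
  have := isTopologicalAddGroup_tau0 (X := X) (x₀ := x₀) (F := F)
  intro S hS
  refine isOpen_tauGamma_iff.2 fun f hf => ?_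
  have hS0 : (f + ·) ⁻¹' S ∈ 𝓝 (0 : lip0 X x₀ F) :=
    (continuous_const_add f).continuousAt.preimage_mem_nhds (by simpa using hS.mem_nhds hf)
  obtain ⟨⟨K, ε⟩, ⟨hK, hε⟩, hKε⟩ := tau0_hasBasis_zero.mem_iff.1 hS0
  refine ⟨fun i => {g | ∀ x ∈ K, ‖toFun' g x‖ < ε / 2 / 2 ^ i}, fun i =>
    ⟨tau0_hasBasis_zero.mem_of_mem (i := (K, _)) ⟨hK, by positivity⟩,
      convex_and_balanced_setOf_forall_norm_lt K _⟩, ?_⟩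
  rintro _ ⟨g, hg, rfl⟩
  obtain ⟨n, h, hh, rfl⟩ := mem_gammaSet_iff.1 hg
  refine hKε fun x hx => ?_
  rw [toFun'_sum, Finset.sum_apply]
  exact (norm_sum_le _ _).trans_lt
    (sum_range_lt_of_lt_div_two_pow hε.le n fun i hi => (hh i hi).1 x hx)

lemma exists_tau0_nhds_add_mem {f : lip0 X x₀ F} {V : Set (lip0 X x₀ F)}
    (hV : V ∈ @nhds _ (tauGamma X x₀ F) f) (r : ℝ) :
    ∃ W ∈ @nhds _ (tau0 X x₀ F) 0, ∀ g ∈ W, ‖g‖ ≤ r → f + g ∈ V := by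
  obtain ⟨U, hU, hUV⟩ := exists_isAdmissible_of_mem_nhds hV
  obtain ⟨n, hn⟩ := pow_unbounded_of_one_lt r one_lt_two
  exact ⟨U n, (hU n).1, fun g hg hgr => hUV ⟨g, hU.mem_gammaSet hg (hgr.trans hn.le), rfl⟩⟩

end TauGamma

section Seminorms

def IsTau0ApproximableOnBalls (p : Seminorm ℝ (lip0 X x₀ F)) : Prop :=
  ∀ r ε : ℝ, 0 < ε → ∃ q : Seminorm ℝ (lip0 X x₀ F),
    Continuous[tau0 X x₀ F, _] q ∧ ∀ g, ‖g‖ ≤ r → p g ≤ q g + ε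

lemma exists_isAdmissible_forall_gammaSet_lt {p : Seminorm ℝ (lip0 X x₀ F)}
    (hp : IsTau0ApproximableOnBalls p) {δ : ℝ} (hδ : 0 < δ) :
    ∃ U, IsAdmissible U ∧ ∀ g ∈ gammaSet X x₀ F U, p g < δ := by
  choose q hq hpq using fun i : ℕ => hp (2 ^ i) (δ / 4 / 2 ^ i) (by positivity)
  refine ⟨fun i => (q i).ball 0 (δ / 4 / 2 ^ i), fun i =>
    ⟨?_, Seminorm.convex_ball _ _ _, Seminorm.balanced_ball_zero _ _⟩, fun g hg => ?_⟩
  · let := tau0 X x₀ F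
    change (q i).ball 0 _ ∈ _
    rw [Seminorm.ball_zero_eq]
    refine (isOpen_lt (hq i) continuous_const).mem_nhds ?_
    simp only [mem_ofPred_eq, map_zero]
    positivity
  · obtain ⟨n, h, hh, rfl⟩ := mem_gammaSet_iff.1 hg
    refine (Finset.le_sum_of_subadditive p (map_zero p).le (map_add_le_add p) _ _).trans_lt
      (sum_range_lt_of_lt_div_two_pow hδ.le n fun i hi => ?_)
    obtain ⟨hqi, hnorm⟩ := hh i hi
    calc p (h i) ≤ q i (h i) + δ / 4 / 2 ^ i := hpq i _ hnorm
      _ < δ / 4 / 2 ^ i + δ / 4 / 2 ^ i := by gcongr; exact (Seminorm.mem_ball_zero _).1 hqi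
      _ = δ / 2 / 2 ^ i := by ring

lemma isOpen_tauGamma_setOf_seminorm_lt {p : Seminorm ℝ (lip0 X x₀ F)}
    (hp : IsTau0ApproximableOnBalls p) (c : ℝ) :
    IsOpen[tauGamma X x₀ F] {f | p f < c} := by
  refine isOpen_tauGamma_iff.2 fun f hf => ?_
  obtain ⟨U, hU, hpU⟩ := exists_isAdmissible_forall_gammaSet_lt hp (sub_pos.2 hf)
  refine ⟨U, hU, ?_⟩
  rintro _ ⟨g, hg, rfl⟩
  have := hpU g hg
  calc p (f + g) ≤ p f + p g := map_add_le_add p f g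
    _ < c := by linarith

variable (x₀ F) in
def supSlopeSeminorm (α : ℕ → ℝ≥0) (z : ℕ → X × X) : Seminorm ℝ (lip0 X x₀ F) :=
  ⨆ n, α n • slopeSeminorm (z n).1 (z n).2

variable {α : ℕ → ℝ≥0} {z : ℕ → X × X}

lemma bddAbove_range_smul_slopeSeminorm (hα : BddAbove (range α)) :
    BddAbove (range fun n => α n • slopeSeminorm (x₀ := x₀) (F := F) (z n).1 (z n).2) := by
  obtain ⟨M, hM⟩ := hα
  refine Seminorm.bddAbove_range_iff.2 fun f => ⟨M * ‖f‖, ?_⟩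
  rintro _ ⟨n, rfl⟩
  exact mul_le_mul (hM ⟨n, rfl⟩) (slopeSeminorm_le_norm _ _ f) (apply_nonneg _ _) M.2

lemma supSlopeSeminorm_apply (hα : BddAbove (range α)) (f : lip0 X x₀ F) :
    supSlopeSeminorm x₀ F α z f = ⨆ n, α n * slopeSeminorm (z n).1 (z n).2 f :=
  Seminorm.iSup_apply (bddAbove_range_smul_slopeSeminorm hα)

lemma le_supSlopeSeminorm (hα : BddAbove (range α)) (f : lip0 X x₀ F) (n : ℕ) :
    α n * slopeSeminorm (z n).1 (z n).2 f ≤ supSlopeSeminorm x₀ F α z f := by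
  rw [supSlopeSeminorm_apply hα]
  exact le_ciSup ((Seminorm.bddAbove_range_iff.1 (bddAbove_range_smul_slopeSeminorm hα)) f) n

lemma isTau0ApproximableOnBalls_supSlopeSeminorm (hα : Tendsto α atTop (𝓝 0)) :
    IsTau0ApproximableOnBalls (supSlopeSeminorm x₀ F α z) := by
  intro r ε hε
  have hαr : Tendsto (fun n => (α n : ℝ) * r) atTop (𝓝 0) := by
    simpa using (NNReal.tendsto_coe.2 hα).mul_const r
  obtain ⟨N, hN⟩ := eventually_atTop.1 (hαr.eventually (gt_mem_nhds hε))
  let := tau0 X x₀ F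
  have := isTopologicalAddGroup_tau0 (X := X) (x₀ := x₀) (F := F)
  refine ⟨(Finset.range N).sup fun n => α n • slopeSeminorm (z n).1 (z n).2,
    Seminorm.continuous_finsetSup fun n _ => (continuous_tau0_slopeSeminorm _ _).const_smul _,
    fun g hg => ?_⟩
  rw [supSlopeSeminorm_apply hα.bddAbove_range]
  refine ciSup_le fun n => ?_
  rcases lt_or_ge n N with hn | hn
  · exact (Seminorm.le_finset_sup_apply (p := fun n => α n • slopeSeminorm (z n).1 (z n).2)
      (Finset.mem_range.2 hn)).trans (le_add_of_nonneg_right hε.le)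
  · calc (α n : ℝ) * slopeSeminorm (z n).1 (z n).2 g ≤ α n * r :=
          mul_le_mul_of_nonneg_left ((slopeSeminorm_le_norm _ _ g).trans hg) (α n).2
      _ ≤ _ := (hN n hn).le.trans (le_add_of_nonneg_left (apply_nonneg _ _))

end Seminorms

section Compactness

variable {B : Set (lip0 X x₀ F)}

lemma tendsto_two_inv_pow : Tendsto (fun n : ℕ => (2⁻¹ : ℝ≥0) ^ n) atTop (𝓝 0) :=
  NNReal.tendsto_pow_atTop_nhds_zero_of_lt_one (by norm_num)

lemma exists_not_bddAbove_supSlopeSeminorm (hB : ¬NormBounded X x₀ F B) :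
    ∃ z : ℕ → X × X, ¬BddAbove (supSlopeSeminorm x₀ F (fun n => 2⁻¹ ^ n) z '' B) := by
  simp only [NormBounded, not_exists, not_forall, not_le, exists_prop] at hB
  have (n : ℕ) : ∃ f ∈ B, ∃ x y : X, 4 ^ n < slopeSeminorm x y f := by
    obtain ⟨f, hf, hlt⟩ := hB (4 ^ n)
    exact ⟨f, hf, exists_lt_slopeSeminorm hlt⟩
  choose f hf x y hxy using this
  refine ⟨fun n => (x n, y n), fun ⟨M, hM⟩ => ?_⟩
  obtain ⟨n, hn⟩ := pow_unbounded_of_one_lt M one_lt_two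
  have hgrowth :
      (2 : ℝ) ^ n < supSlopeSeminorm x₀ F (fun n => 2⁻¹ ^ n) (fun n => (x n, y n)) (f n) :=
    calc (2 : ℝ) ^ n = 2⁻¹ ^ n * 4 ^ n := by rw [← mul_pow]; norm_num
      _ < ((2⁻¹ : ℝ≥0) ^ n : ℝ≥0) * slopeSeminorm (x n) (y n) (f n) := by
        push_cast
        exact mul_lt_mul_of_pos_left (hxy n) (by positivity)
      _ ≤ _ := le_supSlopeSeminorm (α := fun n => (2⁻¹ : ℝ≥0) ^ n)
          (z := fun n => (x n, y n)) tendsto_two_inv_pow.bddAbove_range (f n) n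
  linarith [hM ⟨f n, hf n, rfl⟩]

lemma normBounded_of_isCompact (hB : @IsCompact _ (tauGamma X x₀ F) B) :
    NormBounded X x₀ F B := by
  by_contra h
  obtain ⟨z, hz⟩ := exists_not_bddAbove_supSlopeSeminorm h
  let := tauGamma X x₀ F
  exact hz <| UpperSemicontinuousOn.bddAbove_of_isCompact hB <|
    (upperSemicontinuous_iff_isOpen_preimage.2
      (isOpen_tauGamma_setOf_seminorm_lt
        (isTau0ApproximableOnBalls_supSlopeSeminorm tendsto_two_inv_pow))).upperSemicontinuousOn B

lemma normBounded_of_isPrecompact (hB : IsPrecompact (tauGamma X x₀ F) B) :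
    NormBounded X x₀ F B := by
  by_contra h
  obtain ⟨z, hz⟩ := exists_not_bddAbove_supSlopeSeminorm h
  exact hz (hB.bddAbove_image_seminorm _ <| @IsOpen.mem_nhds _ (tauGamma X x₀ F) _ _
    (isOpen_tauGamma_setOf_seminorm_lt
      (isTau0ApproximableOnBalls_supSlopeSeminorm tendsto_two_inv_pow) 1) (by simp))

lemma continuousOn_id_tau0_tauGamma (hB : NormBounded X x₀ F B) :
    @ContinuousOn _ _ (tau0 X x₀ F) (tauGamma X x₀ F) id B := by
  obtain ⟨C, hC⟩ := hB
  let := tau0 X x₀ F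
  have := isTopologicalAddGroup_tau0 (X := X) (x₀ := x₀) (F := F)
  intro f hf V hV
  obtain ⟨W, hW, hWV⟩ := exists_tau0_nhds_add_mem hV (C + C)
  have hW' : (· - f) ⁻¹' W ∈ 𝓝 f :=
    (continuous_sub_right f).continuousAt.preimage_mem_nhds (by simpa using hW)
  filter_upwards [mem_nhdsWithin_of_mem_nhds hW', self_mem_nhdsWithin] with g hgW hgB
  simpa using hWV _ hgW ((norm_sub_le _ _).trans (add_le_add (hC g hgB) (hC f hf)))

lemma isPrecompact_tauGamma_of_isPrecompact_tau0 (hb : NormBounded X x₀ F B)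
    (hB : IsPrecompact (tau0 X x₀ F) B) : IsPrecompact (tauGamma X x₀ F) B := by
  obtain ⟨C, hC⟩ := hb
  intro V hV
  obtain ⟨W, hW, hWV⟩ := exists_tau0_nhds_add_mem hV (C + C)
  let := tau0 X x₀ F
  have := isTopologicalAddGroup_tau0 (X := X) (x₀ := x₀) (F := F)
  obtain ⟨A, hAB, hA⟩ := hB.exists_finset_subset_add hW
  refine ⟨A, fun f hf => ?_⟩
  obtain ⟨a, ha, w, hw, rfl⟩ := hA hf
  have hnorm : ‖w‖ ≤ C + C := by
    simpa using (norm_sub_le (a + w) a).trans (add_le_add (hC _ hf) (hC a (hAB ha)))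
  exact ⟨a, ha, w, by simpa using hWV w hw hnorm, rfl⟩

lemma normBounded_closure_tau0 (hB : NormBounded X x₀ F B) :
    NormBounded X x₀ F (closure[tau0 X x₀ F] B) := by
  obtain ⟨C, hC⟩ := hB
  exact ⟨max C 0, fun f hf => @closure_minimal _ (tau0 X x₀ F) _ _
    (fun g hg => (hC g hg).trans (le_max_left C 0)) (isClosed_tau0_closedBall (le_max_right C 0))
    f hf⟩

theorem isCompact_tauGamma_iff :
    @IsCompact _ (tauGamma X x₀ F) B ↔
      NormBounded X x₀ F B ∧ @IsCompact _ (tau0 X x₀ F) B :=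
  ⟨fun h => ⟨normBounded_of_isCompact h, isCompact_of_le tauGamma_le_tau0 h⟩, fun ⟨hb, h⟩ => by
    simpa using @IsCompact.image_of_continuousOn _ _ (tau0 X x₀ F) (tauGamma X x₀ F) _ _ h
      (continuousOn_id_tau0_tauGamma hb)⟩

theorem isPrecompact_tauGamma_iff :
    IsPrecompact (tauGamma X x₀ F) B ↔
      NormBounded X x₀ F B ∧ IsPrecompact (tau0 X x₀ F) B :=
  ⟨fun h => ⟨normBounded_of_isPrecompact h, h.mono tauGamma_le_tau0⟩,
    fun ⟨hb, h⟩ => isPrecompact_tauGamma_of_isPrecompact_tau0 hb h⟩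

theorem isCompact_closure_tauGamma_iff :
    @IsCompact _ (tauGamma X x₀ F) (closure[tauGamma X x₀ F] B) ↔
      NormBounded X x₀ F B ∧ @IsCompact _ (tau0 X x₀ F) (closure[tau0 X x₀ F] B) := by
  constructor
  · intro h
    let := tau0 X x₀ F
    have := t2Space_tau0 (X := X) (x₀ := x₀) (F := F)
    obtain ⟨⟨C, hC⟩, hK⟩ := isCompact_tauGamma_iff.1 h
    exact ⟨⟨C, fun f hf => hC f (@subset_closure _ (tauGamma X x₀ F) B f hf)⟩,
      hK.of_isClosed_subset isClosed_closure
        (closure_minimal (@subset_closure _ (tauGamma X x₀ F) B) hK.isClosed)⟩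
  · rintro ⟨hb, hK⟩
    exact @IsCompact.of_isClosed_subset _ (tauGamma X x₀ F) _ _
      (isCompact_tauGamma_iff.2 ⟨normBounded_closure_tau0 hb, hK⟩)
      (@isClosed_closure _ (tauGamma X x₀ F) _) (closure.mono tauGamma_le_tau0)

end Compactness

/-- A subset of `Lip₀(X)` is `τ_γ`-compact iff it is norm bounded and
`τ₀`-compact; the same holds with "compact" replaced by "precompact" (totally bounded:
for every neighborhood `V` of zero the set is covered by finitely many translates of
`V`) and by "relatively compact" (compact closure). -/
theorem stmt4 (X : Type*) [MetricSpace X] (x₀ : X) (B : Set (lip0 X x₀ ℝ)) :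
    (@IsCompact _ (tauGamma X x₀ ℝ) B ↔
      NormBounded X x₀ ℝ B ∧ @IsCompact _ (tau0 X x₀ ℝ) B) ∧
    ((∀ V ∈ @nhds _ (tauGamma X x₀ ℝ) 0, ∃ A : Finset (lip0 X x₀ ℝ), B ⊆ ↑A + V) ↔
      NormBounded X x₀ ℝ B ∧
        ∀ V ∈ @nhds _ (tau0 X x₀ ℝ) 0, ∃ A : Finset (lip0 X x₀ ℝ), B ⊆ ↑A + V) ∧
    (@IsCompact _ (tauGamma X x₀ ℝ) (@closure _ (tauGamma X x₀ ℝ) B) ↔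
      NormBounded X x₀ ℝ B ∧ @IsCompact _ (tau0 X x₀ ℝ) (@closure _ (tau0 X x₀ ℝ) B)) :=
  ⟨isCompact_tauGamma_iff, isPrecompact_tauGamma_iff, isCompact_closure_tauGamma_iff⟩

end LipApprox
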